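/- Let K be a finite field of cardinality q and characteristic p. If p = 2, then there exists y ∈ K such that the y-monomial minimal solution over K is irreducible and has size q + 1. If p ≠ 2, then there exists y ∈ K such that the y-monomial minimal solution over K is irreducible and has size (q + 1)/2. In particular the maximal size of irreducible λ-quiddities over K is at least q + 1 when p = 2 and at least (q+1)/2 when p ≠ 2. -/

import Mathlib

namespace Quiddity

variable {A : Type*} [CommRing A]

/-- `mMat [a₁, …, aₙ]` is the matrix product `[[aₙ,-1],[1,0]] ⋯ [[a₁,-1],[1,0]]`. -/
def mMat : List A → Matrix (Fin 2) (Fin 2) A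
  | [] => 1
  | a :: t => mMat t * !![a, -1; 1, 0]

/-- Continuant: `cont [] = K₀ = 1`, `cont [a] = K₁(a) = a`, and the continuant recursion. -/
def cont : List A → A
  | [] => 1
  | [a] => a
  | a :: b :: t => a * cont (b :: t) - cont t

/-- A λ-quiddity is a tuple with `Mₙ(a₁,…,aₙ) = ± Id`. -/
def IsQuiddity (l : List A) : Prop := mMat l = 1 ∨ mMat l = -1

/-- The sum `⊕` of two tuples (meaningful for tuples of length ≥ 2):
`(a₁,…,aₘ) ⊕ (b₁,…,b_l) = (a₁+b_l, a₂,…,a_{m−1}, aₘ+b₁, b₂,…,b_{l−1})`. -/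
def oplus (la lb : List A) : List A :=
  (la.headD 0 + lb.getLastD 0) ::
    (la.tail.dropLast ++ (la.getLastD 0 + lb.headD 0) :: lb.tail.dropLast)

/-- Two tuples are equivalent if one is a cyclic permutation of the other or of its
reversal. -/
def TupleEquiv (l l' : List A) : Prop :=
  List.IsRotated l l' ∨ List.IsRotated l.reverse l'

/-- A λ-quiddity `c` is reducible if `c ∼ a ⊕ b` with `b` a λ-quiddity and both of size ≥ 3. -/
def QuiddityReducible (c : List A) : Prop :=
  ∃ a b : List A, 3 ≤ a.length ∧ 3 ≤ b.length ∧ IsQuiddity b ∧ TupleEquiv c (oplus a b)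

/-- `(a, b, a, b, …, a, b)` with `k` repetitions of the pair `(a, b)` (size `2k`). -/
def dynList : ℕ → A → A → List A
  | 0, _, _ => []
  | k + 1, a, b => a :: b :: dynList k a b

/-- `(u, v, v, u, v, v, …, u, v, v)` with `k` repetitions of the block `(u, v, v)`
(size `3k`). -/
def triList : ℕ → A → A → List A
  | 0, _, _ => []
  | k + 1, a, b => a :: b :: b :: triList k a b

end Quiddity

/-! Let `ζ` be a primitive `(q+1)`-th root of unity in an extension of `K`. Since `ζ ^ q = ζ⁻¹`,
the Frobenius fixes `y = ζ + ζ⁻¹`, so `y ∈ K`. The entries of `M_k(y, …, y)` are the values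
`S_j(y)` of the Chebyshev polynomials `S_{j+2} = X S_{j+1} - S_j`, and
`(ζ - ζ⁻¹) S_j(ζ + ζ⁻¹) = ζ ^ (j+1) - ζ⁻¹ ^ (j+1)`. Hence `(y, …, y)` of size `k` is a λ-quiddity
iff `n ∣ k`, where `n` is the order of `ζ²`: `q + 1` for `q` even and `(q+1)/2` for `q` odd.
A decomposition `(y, …, y) ∼ a ⊕ b` forces `b = (u, y, …, y, v)` with `m` inner entries,
`1 ≤ m ≤ n - 3`, and `M(b) = ±Id` gives `S_m(y) = ±1`, i.e. `(ζ²) ^ m = 1` or `(ζ²) ^ (m+2) = 1`,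
impossible since `0 < m < m + 2 < n`. -/

universe u

open Polynomial
open Polynomial.Chebyshev (S S_add_one S_add_two S_eq S_sq_add_S_sq algebraMap_eval_S)

namespace Quiddity

lemma eq_replicate_of_tupleEquiv {α : Type*} {n : ℕ} {y : α} {l : List α}
    (h : TupleEquiv (List.replicate n y) l) : l = List.replicate n y := by
  rcases h with ⟨k, rfl⟩ | ⟨k, rfl⟩ <;> simp [List.rotate_replicate]

section CommRing

variable {A : Type*} [CommRing A]

lemma mMat_append (u v : List A) : mMat (u ++ v) = mMat v * mMat u := by
  induction u with
  | nil => simp [mMat]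
  | cons a t ih => simp [mMat, ih, mul_assoc]

lemma mMat_replicate (n : ℕ) (y : A) : mMat (List.replicate n y) = !![y, -1; 1, 0] ^ n := by
  induction n with
  | zero => rfl
  | succ n ih => rw [List.replicate_succ, mMat, ih, pow_succ]

lemma pow_eq_eval_chebyshevS (y : A) (n : ℕ) :
    !![y, -1; 1, 0] ^ n =
      !![(S A n).eval y, -(S A (n - 1)).eval y; (S A (n - 1)).eval y, -(S A (n - 2)).eval y] := by
  induction n with
  | zero => simp [← Matrix.one_fin_two]
  | succ n ih =>
    rw [pow_succ, ih, Matrix.mul_fin_two]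
    push_cast
    rw [add_sub_cancel_right, show (n : ℤ) + 1 - 2 = n - 1 by ring, S_add_one, S_eq A (n : ℤ)]
    ext i j
    fin_cases i <;> fin_cases j <;> simp <;> ring

lemma mMat_cons_replicate_append_apply_one_one (u v y : A) (m : ℕ) :
    mMat (u :: List.replicate m y ++ [v]) 1 1 = -(S A m).eval y := by
  simp [mMat, mMat_append, mMat_replicate, pow_eq_eval_chebyshevS, Matrix.mul_apply]

lemma length_oplus {a b : List A} (ha : 2 ≤ a.length) (hb : 2 ≤ b.length) :
    (oplus a b).length = a.length + b.length - 2 := by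
  simp only [oplus, List.length_cons, List.length_append, List.length_dropLast, List.length_tail]
  omega

lemma exists_eq_cons_replicate_append_of_oplus_eq_replicate {a b : List A} {n : ℕ} {y : A}
    (h : oplus a b = List.replicate n y) (ha : 3 ≤ a.length) (hb : 3 ≤ b.length) :
    ∃ u v m, b = u :: List.replicate m y ++ [v] ∧ 1 ≤ m ∧ m + 3 ≤ n := by
  obtain ⟨u, w, v, rfl⟩ : ∃ u w v, b = u :: w ++ [v] := by
    obtain _ | ⟨u, b'⟩ := b
    · simp at hb
    obtain rfl | ⟨w, v, rfl⟩ := b'.eq_nil_or_concat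
    · simp at hb
    exact ⟨u, w, v, by simp⟩
  have hlen := length_oplus (a := a) (b := u :: w ++ [v]) (by omega) (by omega)
  rw [h, List.length_replicate] at hlen
  simp only [List.length_append, List.length_cons, List.length_nil] at hlen hb
  have hw : ∀ x ∈ w, x = y := fun x hx =>
    List.eq_of_mem_replicate (n := n) (h ▸ by simp [oplus, hx])
  exact ⟨u, v, w.length, by rw [← List.eq_replicate_iff.mpr ⟨rfl, hw⟩], by omega, by omega⟩

lemma not_quiddityReducible_replicate {n : ℕ} {y : A}
    (h : ∀ m, 1 ≤ m → m + 3 ≤ n → (S A m).eval y ^ 2 ≠ 1) :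
    ¬ QuiddityReducible (List.replicate n y) := by
  rintro ⟨a, b, ha, hb, hquid, hequiv⟩
  obtain ⟨u, v, m, rfl, hm, hmn⟩ :=
    exists_eq_cons_replicate_append_of_oplus_eq_replicate (eq_replicate_of_tupleEquiv hequiv) ha hb
  refine h m hm hmn ?_
  have h11 := mMat_cons_replicate_append_apply_one_one u v y m
  rcases hquid with hM | hM <;> rw [hM] at h11 <;>
    simp only [Matrix.one_apply_eq, Matrix.neg_apply] at h11
  · linear_combination ((S A m).eval y - 1) * h11
  · linear_combination ((S A m).eval y + 1) * h11

end CommRing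

section IsDomain

variable {A : Type*} [CommRing A] [IsDomain A]

lemma isQuiddity_replicate_iff (n : ℕ) (y : A) :
    IsQuiddity (List.replicate n y) ↔ (S A (n - 1)).eval y = 0 := by
  rw [IsQuiddity, mMat_replicate, pow_eq_eval_chebyshevS]
  constructor
  · rintro (h | h) <;> simpa using congrFun (congrFun h 1) 0
  · intro h
    have hsq : (S A (n - 2)).eval y ^ 2 = 1 := by
      simpa [h, show (n : ℤ) - 2 + 1 = n - 1 by ring] using
        congrArg (eval y) (S_sq_add_S_sq A (n - 2))
    have hn : (S A n).eval y = -(S A (n - 2)).eval y := by simp [S_eq A (n : ℤ), h]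
    rcases sq_eq_one_iff.mp hsq with h1 | h1
    · right; ext i j; fin_cases i <;> fin_cases j <;> simp [hn, h, h1]
    · left; ext i j; fin_cases i <;> fin_cases j <;> simp [hn, h, h1]

end IsDomain

section RootOfUnity

variable {L : Type*} [Field L] {ζ : L}

lemma sub_inv_mul_eval_chebyshevS_add_inv (hζ : ζ ≠ 0) (n : ℕ) :
    (ζ - ζ⁻¹) * (S L n).eval (ζ + ζ⁻¹) = ζ ^ (n + 1) - ζ⁻¹ ^ (n + 1) := by
  induction n using Nat.twoStepInduction with
  | zero => simp
  | one => simp; ring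
  | more n ih0 ih1 =>
    push_cast at ih1 ⊢
    rw [S_add_two, eval_sub, eval_mul, eval_X]
    linear_combination (ζ + ζ⁻¹) * ih1 - ih0 + (ζ ^ (n + 1) - ζ⁻¹ ^ (n + 1)) * mul_inv_cancel₀ hζ

lemma eval_chebyshevS_add_inv_eq_zero_iff (hζ : ζ ≠ 0) (hζ2 : ζ ^ 2 ≠ 1) (n : ℕ) :
    (S L n).eval (ζ + ζ⁻¹) = 0 ↔ (ζ ^ 2) ^ (n + 1) = 1 := by
  have hδ : ζ - ζ⁻¹ ≠ 0 := fun h => hζ2 (by linear_combination ζ * h + mul_inv_cancel₀ hζ)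
  rw [← mul_right_inj' hδ, mul_zero, sub_inv_mul_eval_chebyshevS_add_inv hζ, sub_eq_zero,
    inv_pow, ← mul_eq_one_iff_eq_inv₀ (pow_ne_zero _ hζ), ← pow_mul, ← pow_add]
  ring_nf

lemma eval_chebyshevS_add_inv_sq_eq_one (hζ : ζ ≠ 0) {n : ℕ}
    (h : (S L n).eval (ζ + ζ⁻¹) ^ 2 = 1) : (ζ ^ 2) ^ n = 1 ∨ (ζ ^ 2) ^ (n + 2) = 1 := by
  have key := sub_inv_mul_eval_chebyshevS_add_inv hζ n
  set c := (S L n).eval (ζ + ζ⁻¹)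
  set W := ζ ^ (n + 1)
  set V := ζ⁻¹ ^ (n + 1)
  have hWV : W * V = 1 := by rw [← mul_pow, mul_inv_cancel₀ hζ, one_pow]
  have hab := mul_inv_cancel₀ hζ
  -- `(W - W⁻¹)² = (ζ - ζ⁻¹)²`, cleared of denominators, factors as follows.
  have : (W ^ 2 - ζ ^ 2) * (W ^ 2 * ζ ^ 2 - 1) = 0 := by
    linear_combination W ^ 2 * ζ ^ 2 * (-((W - V) + (ζ - ζ⁻¹) * c) * key + (ζ - ζ⁻¹) ^ 2 * h)
      + 2 * W ^ 2 * ζ ^ 2 * hWV - ζ ^ 2 * (W * V + 1) * hWV - 2 * W ^ 2 * ζ ^ 2 * hab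
      + W ^ 2 * (ζ * ζ⁻¹ + 1) * hab
  rcases mul_eq_zero.mp this with h1 | h1
  · left
    apply mul_left_cancel₀ (pow_ne_zero 2 hζ)
    linear_combination h1
  · right
    linear_combination h1

end RootOfUnity

section PrimitiveRoot

variable {K L : Type*} [Field K] [Field L] [Algebra K L] {ζ : L} {y : K}

lemma isQuiddity_replicate_iff_dvd (hy : algebraMap K L y = ζ + ζ⁻¹) {n : ℕ} (hn : 2 ≤ n)
    (hω : IsPrimitiveRoot (ζ ^ 2) n) (k : ℕ) : IsQuiddity (List.replicate k y) ↔ n ∣ k := by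
  have hζ : ζ ≠ 0 := pow_ne_zero_iff two_ne_zero |>.mp (hω.ne_zero (by omega))
  cases k with
  | zero => simp [IsQuiddity, mMat]
  | succ k =>
    rw [isQuiddity_replicate_iff, Nat.cast_succ, add_sub_cancel_right,
      ← (algebraMap K L).injective.eq_iff, map_zero, algebraMap_eval_S, hy,
      eval_chebyshevS_add_inv_eq_zero_iff hζ (hω.ne_one (by omega)), hω.pow_eq_one_iff_dvd]

lemma not_quiddityReducible_replicate_of_isPrimitiveRoot (hy : algebraMap K L y = ζ + ζ⁻¹)
    {n : ℕ} (hω : IsPrimitiveRoot (ζ ^ 2) n) : ¬ QuiddityReducible (List.replicate n y) := by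
  refine not_quiddityReducible_replicate fun m hm hmn hsq => ?_
  have hζ : ζ ≠ 0 := pow_ne_zero_iff two_ne_zero |>.mp (hω.ne_zero (by omega))
  have hsqL : (S L m).eval (ζ + ζ⁻¹) ^ 2 = 1 := by
    rw [← hy, ← algebraMap_eval_S, ← map_pow, hsq, map_one]
  rcases eval_chebyshevS_add_inv_sq_eq_one hζ hsqL with h | h
  · have := Nat.le_of_dvd (by omega) (hω.dvd_of_pow_eq_one _ h)
    omega
  · have := Nat.le_of_dvd (by omega) (hω.dvd_of_pow_eq_one _ h)
    omega

theorem exists_minimal_irreducible_monomial_of_isPrimitiveRoot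
    (hy : algebraMap K L y = ζ + ζ⁻¹) {n : ℕ} (hn : 2 ≤ n) (hω : IsPrimitiveRoot (ζ ^ 2) n) :
    (∃ (y : K) (m : ℕ), 0 < m ∧ IsQuiddity (List.replicate m y) ∧
        (∀ k, 0 < k → IsQuiddity (List.replicate k y) → m ≤ k) ∧ m = n ∧
        ¬ QuiddityReducible (List.replicate m y)) ∧
      (∃ l : List K, IsQuiddity l ∧ ¬ QuiddityReducible l ∧ n ≤ l.length) := by
  have hquid := isQuiddity_replicate_iff_dvd hy hn hω
  have hirr := not_quiddityReducible_replicate_of_isPrimitiveRoot hy hω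
  exact ⟨⟨y, n, by omega, (hquid n).mpr dvd_rfl,
      fun k hk h => Nat.le_of_dvd hk ((hquid k).mp h), rfl, hirr⟩,
    ⟨_, (hquid n).mpr dvd_rfl, hirr, (List.length_replicate ..).ge⟩⟩

end PrimitiveRoot

section FiniteField

variable (K : Type u) [Field K] [Fintype K]

lemma exists_algebraMap_eq_of_pow_card_eq_self {L : Type*} [Field L] [Algebra K L] {z : L}
    (hz : z ^ Fintype.card K = z) : ∃ y, algebraMap K L y = z := by
  have hsplit : ((Finset.univ : Finset K).val.map fun a => X - C a).prod =
      (X ^ Fintype.card K - X : K[X]) := by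
    rw [← FiniteField.roots_X_pow_card_sub_X K]
    refine prod_multiset_X_sub_C_of_monic_of_roots_card_eq
      (monic_X_pow_sub (degree_X_le.trans_lt (by exact_mod_cast Fintype.one_lt_card))) ?_
    rw [FiniteField.X_pow_card_sub_X_natDegree_eq K Fintype.one_lt_card,
      FiniteField.roots_X_pow_card_sub_X K]
    rfl
  have := congrArg (aeval z) hsplit
  simp only [Finset.prod_map_val, map_prod, aeval_sub, aeval_X, aeval_C, map_pow, hz,
    sub_self] at this
  obtain ⟨y, -, hy⟩ := Finset.prod_eq_zero_iff.mp this
  exact ⟨y, (sub_eq_zero.mp hy).symm⟩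

lemma add_inv_pow_card_eq_self {L : Type*} [Field L] [Algebra K L] {ζ : L}
    (hζ : ζ ^ (Fintype.card K + 1) = 1) : (ζ + ζ⁻¹) ^ Fintype.card K = ζ + ζ⁻¹ := by
  have hq : ζ ^ Fintype.card K = ζ⁻¹ := eq_inv_of_mul_eq_one_left (by rw [← pow_succ, hζ])
  have := map_add (FiniteField.frobeniusAlgHom K L) ζ ζ⁻¹
  simp only [FiniteField.coe_frobeniusAlgHom] at this
  rw [this, hq, inv_pow, hq, inv_inv, add_comm]

lemma exists_isPrimitiveRoot_card_add_one :
    ∃ (L : Type u) (_ : Field L) (_ : Algebra K L) (ζ : L),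
      IsPrimitiveRoot ζ (Fintype.card K + 1) := by
  have : NeZero ((Fintype.card K + 1 : ℕ) : K) := ⟨by simp⟩
  obtain ⟨ζ, hζ⟩ := IsCyclotomicExtension.exists_isPrimitiveRoot K
    (CyclotomicField (Fintype.card K + 1) K) (Set.mem_singleton (Fintype.card K + 1))
    (Nat.succ_ne_zero _)
  exact ⟨_, inferInstance, inferInstance, ζ, hζ⟩

end FiniteField

end Quiddity

open Quiddity

/-- over a finite field `K` of cardinality `q`, there is a `y` whose
`y`-monomial minimal solution is irreducible of size `q + 1` (char 2), resp. `(q+1)/2`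
(char ≠ 2); in particular the maximal size of irreducible λ-quiddities is at least that
much. -/
theorem stmt7 (K : Type*) [Field K] [Fintype K] :
    (ringChar K = 2 →
      (∃ (y : K) (n : ℕ), 0 < n ∧ IsQuiddity (List.replicate n y) ∧
          (∀ k, 0 < k → IsQuiddity (List.replicate k y) → n ≤ k) ∧
          n = Fintype.card K + 1 ∧
          ¬ QuiddityReducible (List.replicate n y)) ∧
      (∃ l : List K, IsQuiddity l ∧ ¬ QuiddityReducible l ∧
          Fintype.card K + 1 ≤ l.length)) ∧
    (ringChar K ≠ 2 →
      (∃ (y : K) (n : ℕ), 0 < n ∧ IsQuiddity (List.replicate n y) ∧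
          (∀ k, 0 < k → IsQuiddity (List.replicate k y) → n ≤ k) ∧
          n = (Fintype.card K + 1) / 2 ∧
          ¬ QuiddityReducible (List.replicate n y)) ∧
      (∃ l : List K, IsQuiddity l ∧ ¬ QuiddityReducible l ∧
          (Fintype.card K + 1) / 2 ≤ l.length)) := by
  obtain ⟨L, _, _, ζ, hζ⟩ := exists_isPrimitiveRoot_card_add_one K
  obtain ⟨y, hy⟩ :=
    exists_algebraMap_eq_of_pow_card_eq_self K (add_inv_pow_card_eq_self K hζ.pow_eq_one)
  have hq : 1 < Fintype.card K := Fintype.one_lt_card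
  refine ⟨fun hchar => ?_, fun hchar => ?_⟩
  · have hq2 := FiniteField.even_card_iff_char_two.mp hchar
    exact exists_minimal_irreducible_monomial_of_isPrimitiveRoot hy (by omega)
      (hζ.pow_of_coprime 2 (Nat.coprime_two_left.mpr (Nat.odd_iff.mpr (by omega))))
  · have hq2 := FiniteField.odd_card_of_char_ne_two hchar
    exact exists_minimal_irreducible_monomial_of_isPrimitiveRoot hy (by omega)
      (hζ.pow (by omega) (by omega))
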